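/- arXiv:2002.04007 — 5 statements merged into one kernel-verified Lean document; each statement's English description precedes it below -/
import Mathlib

section
/- Let $w_1,\dots,w_n$ be nonnegative real numbers, let $H$ be an inner product space (over $\mathbb{R}$ or $\mathbb{C}$), let $u \in H$ and let $v_1,\dots,v_n \in H$. Then $\sum_{i=1}^n w_i |\langle u, v_i\rangle|^2 \le \|u\|^2 \cdot \sup_{1 \le i \le n} \sum_{j=1}^n w_j |\langle v_i, v_j\rangle|$. -/
/-- Bombieri–Halász–Montgomery inequality: for nonnegative weights `w i`,
a vector `u` and vectors `v i` in an inner product space over `ℝ` or `ℂ`,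
`∑ i, w i * |⟪u, v i⟫|² ≤ ‖u‖² * sup_i ∑ j, w j * |⟪v i, v j⟫|`. -/
theorem bombieri_halasz_montgomery {𝕜 : Type*} [RCLike 𝕜]
    {H : Type*} [NormedAddCommGroup H] [InnerProductSpace 𝕜 H]
    (n : ℕ) (w : Fin n → ℝ) (hw : ∀ i, 0 ≤ w i) (u : H) (v : Fin n → H) :
    ∑ i, w i * ‖(inner 𝕜 u (v i) : 𝕜)‖ ^ 2 ≤
      ‖u‖ ^ 2 * ⨆ i, ∑ j, w j * ‖(inner 𝕜 (v i) (v j) : 𝕜)‖ := by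
  set a : Fin n → 𝕜 := fun i => inner 𝕜 u (v i) with ha
  set S : ℝ := ∑ i, w i * ‖a i‖ ^ 2 with hS
  set M : ℝ := ⨆ i, ∑ j, w j * ‖(inner 𝕜 (v i) (v j) : 𝕜)‖ with hM
  have hSnn : 0 ≤ S := Finset.sum_nonneg fun i _ => mul_nonneg (hw i) (by positivity)
  have hle : ∀ i, ∑ j, w j * ‖(inner 𝕜 (v i) (v j) : 𝕜)‖ ≤ M := by
    intro i
    rw [hM]
    exact le_ciSup (f := fun i => ∑ j, w j * ‖(inner 𝕜 (v i) (v j) : 𝕜)‖)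
      (Set.Finite.bddAbove (Set.finite_range _)) i
  have hMnn : 0 ≤ M := by
    rcases Nat.eq_zero_or_pos n with h | h
    · subst h
      rw [hM, Real.iSup_of_isEmpty]
    · exact le_trans (Finset.sum_nonneg fun j _ => mul_nonneg (hw j) (norm_nonneg _))
        (hle ⟨0, h⟩)
  set c : Fin n → 𝕜 := fun i => (w i : 𝕜) * (starRingEnd 𝕜) (a i) with hc
  set x : H := ∑ i, c i • v i with hx
  have hnc : ∀ i, ‖c i‖ = w i * ‖a i‖ := by
    intro i
    simp [hc, norm_mul, abs_of_nonneg (hw i)]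
  have hux : (inner 𝕜 u x : 𝕜) = (S : 𝕜) := by
    simp only [hx, inner_sum, inner_smul_right, hc, hS]
    push_cast
    refine Finset.sum_congr rfl fun i _ => ?_
    rw [show (inner 𝕜 u (v i) : 𝕜) = a i from rfl, mul_assoc, RCLike.conj_mul]
  have hSle : S ≤ ‖u‖ * ‖x‖ := by
    have := norm_inner_le_norm (𝕜 := 𝕜) u x
    rwa [hux, RCLike.norm_ofReal, abs_of_nonneg hSnn] at this
  have hxx : ‖x‖ ^ 2 ≤ S * M := by
    have h1 : ((‖x‖ : 𝕜)) ^ 2 = ∑ i, ∑ j, (starRingEnd 𝕜) (c i) * (c j * inner 𝕜 (v i) (v j)) := by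
      rw [← inner_self_eq_norm_sq_to_K (𝕜 := 𝕜) x]
      simp only [hx, sum_inner, inner_smul_left]
      refine Finset.sum_congr rfl fun i _ => ?_
      simp only [inner_sum, inner_smul_right, Finset.mul_sum]
    have h2 : ‖x‖ ^ 2 ≤ ∑ i, ∑ j, (w i * ‖a i‖) * ((w j * ‖a j‖) * ‖(inner 𝕜 (v i) (v j) : 𝕜)‖) := by
      calc ‖x‖ ^ 2 = ‖((‖x‖ : 𝕜)) ^ 2‖ := by
            rw [← RCLike.ofReal_pow, RCLike.norm_ofReal, abs_of_nonneg (by positivity)]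
        _ ≤ ∑ i, ∑ j, (w i * ‖a i‖) * ((w j * ‖a j‖) * ‖(inner 𝕜 (v i) (v j) : 𝕜)‖) := by
            rw [h1]
            refine le_trans (norm_sum_le _ _) (Finset.sum_le_sum fun i _ => ?_)
            refine le_trans (norm_sum_le _ _) (Finset.sum_le_sum fun j _ => ?_)
            rw [norm_mul, norm_mul, RCLike.norm_conj, hnc, hnc]
    have hsym : ∀ i j, ‖(inner 𝕜 (v i) (v j) : 𝕜)‖ = ‖(inner 𝕜 (v j) (v i) : 𝕜)‖ :=
      fun i j => norm_inner_symm _ _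
    have h3 : ∑ i, ∑ j, (w i * ‖a i‖) * ((w j * ‖a j‖) * ‖(inner 𝕜 (v i) (v j) : 𝕜)‖)
        ≤ ∑ i, ∑ j, (w i * ‖a i‖ ^ 2) * (w j * ‖(inner 𝕜 (v i) (v j) : 𝕜)‖) := by
      have amgm : ∀ i j, (w i * ‖a i‖) * ((w j * ‖a j‖) * ‖(inner 𝕜 (v i) (v j) : 𝕜)‖)
          ≤ (1/2) * ((w i * ‖a i‖^2) * (w j * ‖(inner 𝕜 (v i) (v j) : 𝕜)‖)
            + (w j * ‖a j‖^2) * (w i * ‖(inner 𝕜 (v i) (v j) : 𝕜)‖)) := by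
        intro i j
        have h := mul_le_mul_of_nonneg_right (mul_le_mul_of_nonneg_left
          (two_mul_le_add_sq (‖a i‖) (‖a j‖))
          (mul_nonneg (mul_nonneg (hw i) (hw j)) (norm_nonneg ((inner 𝕜 (v i) (v j) : 𝕜))))) (by norm_num : (0:ℝ) ≤ 1/2)
        nlinarith [h]
      calc ∑ i, ∑ j, (w i * ‖a i‖) * ((w j * ‖a j‖) * ‖(inner 𝕜 (v i) (v j) : 𝕜)‖)
          ≤ ∑ i, ∑ j, (1/2) * ((w i * ‖a i‖^2) * (w j * ‖(inner 𝕜 (v i) (v j) : 𝕜)‖)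
            + (w j * ‖a j‖^2) * (w i * ‖(inner 𝕜 (v i) (v j) : 𝕜)‖)) :=
            Finset.sum_le_sum fun i _ => Finset.sum_le_sum fun j _ => amgm i j
        _ = ∑ i, ∑ j, (w i * ‖a i‖ ^ 2) * (w j * ‖(inner 𝕜 (v i) (v j) : 𝕜)‖) := by
            have hBA : (∑ i, ∑ j, (w j * ‖a j‖^2) * (w i * ‖(inner 𝕜 (v i) (v j) : 𝕜)‖))
                = ∑ i, ∑ j, (w i * ‖a i‖ ^ 2) * (w j * ‖(inner 𝕜 (v i) (v j) : 𝕜)‖) := by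
              rw [Finset.sum_comm]
              exact Finset.sum_congr rfl fun i _ =>
                Finset.sum_congr rfl fun j _ => by rw [hsym j i]
            have step2 : ∑ i, ∑ j, (1/2:ℝ) * ((w i * ‖a i‖^2) * (w j * ‖(inner 𝕜 (v i) (v j) : 𝕜)‖)
                  + (w j * ‖a j‖^2) * (w i * ‖(inner 𝕜 (v i) (v j) : 𝕜)‖))
                = (1/2:ℝ) * ((∑ i, ∑ j, (w i * ‖a i‖^2) * (w j * ‖(inner 𝕜 (v i) (v j) : 𝕜)‖))
                  + ∑ i, ∑ j, (w j * ‖a j‖^2) * (w i * ‖(inner 𝕜 (v i) (v j) : 𝕜)‖)) := by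
              simp only [Finset.mul_sum, mul_add, Finset.sum_add_distrib]
            rw [step2, hBA]
            ring
    calc ‖x‖ ^ 2 ≤ ∑ i, ∑ j, (w i * ‖a i‖ ^ 2) * (w j * ‖(inner 𝕜 (v i) (v j) : 𝕜)‖) :=
          le_trans h2 h3
      _ = ∑ i, (w i * ‖a i‖ ^ 2) * ∑ j, w j * ‖(inner 𝕜 (v i) (v j) : 𝕜)‖ := by
          simp [Finset.mul_sum]
      _ ≤ ∑ i, (w i * ‖a i‖ ^ 2) * M :=
          Finset.sum_le_sum fun i _ => mul_le_mul_of_nonneg_left (hle i)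
            (mul_nonneg (hw i) (by positivity))
      _ = S * M := by rw [← Finset.sum_mul]
  rcases eq_or_lt_of_le hSnn with h0 | h0
  · rw [← h0]; positivity
  · have key : S * S ≤ (‖u‖ ^ 2 * M) * S := by
      calc S * S ≤ (‖u‖ * ‖x‖) * (‖u‖ * ‖x‖) := mul_le_mul hSle hSle hSnn (by positivity)
        _ = ‖u‖ ^ 2 * ‖x‖ ^ 2 := by ring
        _ ≤ ‖u‖ ^ 2 * (S * M) := mul_le_mul_of_nonneg_left hxx (by positivity)
        _ = (‖u‖ ^ 2 * M) * S := by ring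
    exact le_of_mul_le_mul_right key h0
end

section
/- There is an absolute constant $C > 0$ such that the following holds. Let $P$ be a natural number, let $S$ be a set of primes all less than $P$, let $N \ge P^3$ be a natural number, and let $f : \mathbb{N} \to \mathbb{C}$ satisfy $|f(n)| \le 1$ for all $n$. Then $\sum_{p \in S} \frac{1}{p} \left| \frac{1}{N} \sum_{n \le N} f(n)\,(1 - p\,\mathbb{1}_{p \mid n}) \right|^2 \le C$. -/
/-!
Put `e_p(n) = 𝟙_{p ∣ n} - 1/p`. Since `1 - p 𝟙_{p ∣ n} = -p e_p(n)`, the summand for `p` is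
`p |⟨e_p, f⟩|² / N²`, with `⟨·,·⟩` the inner product of `ℂ^{[1, N]}`. The vectors `e_p` are almost
orthogonal: `‖e_p‖² ≤ N/p`, and for distinct primes `|⟨e_p, e_q⟩| ≤ 1` because
`⟨e_p, e_q⟩ = ⌊N/pq⌋ - ⌊N/p⌋/q - ⌊N/q⌋/p + N/pq`. With Cauchy–Schwarz this gives
`‖∑ c_p e_p‖² ≤ (N + ∑_{p ∈ S} p) ∑ |c_p|²/p`, and the dual inequality is
`∑ p |⟨e_p, f⟩|² ≤ (N + ∑_{p ∈ S} p) ‖f‖² ≤ 2N²`, as `∑_{p ∈ S} p ≤ P² ≤ N`. So `C = 2` works.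
-/

open Finset ComplexConjugate
open scoped InnerProductSpace

section InnerProductSpace

variable {𝕜 E ι : Type*} [RCLike 𝕜] [NormedAddCommGroup E] [InnerProductSpace 𝕜 E]

theorem norm_sum_smul_sq_le_of_norm_inner_le [DecidableEq ι] (s : Finset ι) (v : ι → E)
    (d : ι → ℝ) {B : ℝ} (hB : 0 ≤ B) (hdiag : ∀ i ∈ s, ‖v i‖ ^ 2 ≤ d i)
    (hoff : ∀ i ∈ s, ∀ j ∈ s, i ≠ j → ‖⟪v i, v j⟫_𝕜‖ ≤ B) (c : ι → 𝕜) :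
    ‖∑ i ∈ s, c i • v i‖ ^ 2 ≤ ∑ i ∈ s, d i * ‖c i‖ ^ 2 + B * (∑ i ∈ s, ‖c i‖) ^ 2 := by
  have hentry : ∀ i ∈ s, ∀ j ∈ s, ‖⟪v i, v j⟫_𝕜‖ ≤ (if i = j then d i else 0) + B := by
    intro i hi j hj
    by_cases hij : i = j
    · subst hij
      rw [if_pos rfl, inner_self_eq_norm_sq_to_K, norm_pow, RCLike.norm_ofReal, abs_norm]
      linarith [hdiag i hi]
    · rw [if_neg hij, zero_add]
      exact hoff i hi j hj hij
  calc ‖∑ i ∈ s, c i • v i‖ ^ 2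
      = ‖⟪∑ i ∈ s, c i • v i, ∑ j ∈ s, c j • v j⟫_𝕜‖ := by
        rw [inner_self_eq_norm_sq_to_K, norm_pow, RCLike.norm_ofReal, abs_norm]
    _ ≤ ∑ i ∈ s, ∑ j ∈ s, ‖c i‖ * ‖c j‖ * ‖⟪v i, v j⟫_𝕜‖ := by
        rw [sum_inner]
        simp_rw [inner_sum, inner_smul_left, inner_smul_right]
        refine (norm_sum_le _ _).trans (sum_le_sum fun i _ => (norm_sum_le _ _).trans ?_)
        refine (sum_le_sum fun j _ => ?_)
        rw [norm_mul, norm_mul, RCLike.norm_conj, mul_assoc]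
    _ ≤ ∑ i ∈ s, ∑ j ∈ s, ‖c i‖ * ‖c j‖ * ((if i = j then d i else 0) + B) := by
        gcongr with i hi j hj
        exact hentry i hi j hj
    _ = ∑ i ∈ s, d i * ‖c i‖ ^ 2 + B * (∑ i ∈ s, ‖c i‖) ^ 2 := by
        simp only [mul_add, sum_add_distrib, mul_ite, mul_zero, sum_ite_eq]
        rw [sq, sum_mul_sum, mul_sum]
        congr 1
        · exact sum_congr rfl fun i hi => by rw [if_pos hi]; ring
        · simp_rw [mul_sum, mul_comm B]

theorem sum_mul_norm_inner_sq_le_of_norm_sum_smul_sq_le (s : Finset ι) (v : ι → E) {w : ι → ℝ}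
    (hw : ∀ i ∈ s, 0 < w i) {Δ : ℝ} (hΔ : 0 ≤ Δ)
    (h : ∀ c : ι → 𝕜, ‖∑ i ∈ s, c i • v i‖ ^ 2 ≤ Δ * ∑ i ∈ s, ‖c i‖ ^ 2 / w i) (x : E) :
    ∑ i ∈ s, w i * ‖⟪v i, x⟫_𝕜‖ ^ 2 ≤ Δ * ‖x‖ ^ 2 := by
  -- Test the hypothesis on `c i = w i ⟪v i, x⟫`: then `T = ⟪x, y⟫ ≤ ‖x‖ ‖y‖ ≤ ‖x‖ √(Δ T)`.
  set T := ∑ i ∈ s, w i * ‖⟪v i, x⟫_𝕜‖ ^ 2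
  set y := ∑ i ∈ s, ((w i : 𝕜) * ⟪v i, x⟫_𝕜) • v i
  have hT : 0 ≤ T := sum_nonneg fun i hi => mul_nonneg (hw i hi).le (sq_nonneg _)
  have hTy : (T : 𝕜) = ⟪x, y⟫_𝕜 := by
    simp only [T, y, inner_sum, inner_smul_right]
    push_cast
    refine sum_congr rfl fun i _ => ?_
    rw [← inner_conj_symm x, mul_assoc, RCLike.mul_conj]
  have hy : ‖y‖ ^ 2 ≤ Δ * T := by
    refine (h _).trans_eq ?_
    congr 1
    refine sum_congr rfl fun i hi => ?_
    rw [norm_mul, RCLike.norm_ofReal, abs_of_pos (hw i hi)]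
    field_simp [(hw i hi).ne']
  have hTxy : T ≤ ‖x‖ * ‖y‖ := by
    have := norm_inner_le_norm (𝕜 := 𝕜) x y
    rwa [← hTy, RCLike.norm_ofReal, abs_of_nonneg hT] at this
  rcases hT.eq_or_lt with hT0 | hTpos
  · rw [← hT0]; positivity
  · refine le_of_mul_le_mul_right ?_ hTpos
    calc T * T ≤ ‖x‖ ^ 2 * ‖y‖ ^ 2 := by nlinarith
      _ ≤ ‖x‖ ^ 2 * (Δ * T) := by gcongr
      _ = Δ * ‖x‖ ^ 2 * T := by ring

end InnerProductSpace

noncomputable def centeredDvd (d n : ℕ) : ℝ := (if d ∣ n then 1 else 0) - 1 / d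

theorem sum_Icc_ite_dvd (N d : ℕ) :
    ∑ n ∈ Icc 1 N, (if d ∣ n then (1 : ℝ) else 0) = ⌊(N : ℝ) / d⌋₊ := by
  rw [sum_boole, Nat.floor_div_eq_div, ← Nat.Ioc_filter_dvd_card_eq_div, ← Icc_add_one_left_eq_Ioc,
    zero_add]

theorem sum_centeredDvd_sq_le (N : ℕ) {p : ℕ} (hp : 2 ≤ p) :
    ∑ n ∈ Icc 1 N, centeredDvd p n ^ 2 ≤ N / p := by
  have hp' : (2 : ℝ) ≤ p := by exact_mod_cast hp
  have hsq : ∀ n,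
      centeredDvd p n ^ 2 = (if p ∣ n then (1 : ℝ) else 0) * (1 - 2 / p) + 1 / p ^ 2 := by
    intro n
    unfold centeredDvd
    split_ifs <;> ring
  simp only [hsq, sum_add_distrib, ← sum_mul, sum_Icc_ite_dvd, sum_const, Nat.card_Icc,
    Nat.add_sub_cancel, nsmul_eq_mul]
  have hfloor : (⌊(N : ℝ) / p⌋₊ : ℝ) ≤ N / p := Nat.floor_le (by positivity)
  have h2p : 0 ≤ 1 - 2 / (p : ℝ) := by
    rw [sub_nonneg, div_le_one (by positivity)]; exact hp'
  calc (⌊(N : ℝ) / p⌋₊ : ℝ) * (1 - 2 / p) + N * (1 / p ^ 2)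
      ≤ (N : ℝ) / p * (1 - 2 / p) + N * (1 / p ^ 2) := by gcongr
    _ = (N : ℝ) / p - N / p ^ 2 := by field_simp; ring
    _ ≤ (N : ℝ) / p := by linarith [show (0 : ℝ) ≤ N / p ^ 2 by positivity]

theorem abs_sum_centeredDvd_mul_le_one (N : ℕ) {p q : ℕ} (hpq : p.Coprime q) (hp : 2 ≤ p)
    (hq : 2 ≤ q) : |∑ n ∈ Icc 1 N, centeredDvd p n * centeredDvd q n| ≤ 1 := by
  have hp' : (2 : ℝ) ≤ p := by exact_mod_cast hp
  have hq' : (2 : ℝ) ≤ q := by exact_mod_cast hq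
  have hprod : ∀ n, centeredDvd p n * centeredDvd q n =
      (if p * q ∣ n then (1 : ℝ) else 0) - (if p ∣ n then (1 : ℝ) else 0) / q
        - (if q ∣ n then (1 : ℝ) else 0) / p + 1 / (p * q) := by
    intro n
    have hdvd : p * q ∣ n ↔ p ∣ n ∧ q ∣ n :=
      ⟨fun h => ⟨dvd_of_mul_right_dvd h, dvd_of_mul_left_dvd h⟩,
        fun h => hpq.mul_dvd_of_dvd_of_dvd h.1 h.2⟩
    unfold centeredDvd
    by_cases hpn : p ∣ n <;> by_cases hqn : q ∣ n <;> simp [hpn, hqn, hdvd] <;> field_simp <;> ring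
  simp only [hprod, sum_add_distrib, sum_sub_distrib, ← sum_div, sum_Icc_ite_dvd, sum_const,
    Nat.card_Icc, Nat.add_sub_cancel, nsmul_eq_mul, Nat.cast_mul]
  have hfloor : ∀ x : ℝ, 0 ≤ x → x - 1 ≤ ⌊x⌋₊ ∧ (⌊x⌋₊ : ℝ) ≤ x := fun x hx =>
    ⟨by linarith [Nat.lt_floor_add_one x], Nat.floor_le hx⟩
  set x : ℝ := N / (p * q)
  obtain ⟨hpq₁, hpq₂⟩ := hfloor x (by positivity)
  obtain ⟨hp₁, hp₂⟩ := hfloor ((N : ℝ) / p) (by positivity)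
  obtain ⟨hq₁, hq₂⟩ := hfloor ((N : ℝ) / q) (by positivity)
  have hp₁' : x - 1 / q ≤ ⌊(N : ℝ) / p⌋₊ / q := by
    calc x - 1 / q = ((N : ℝ) / p - 1) / q := by rw [sub_div, div_div]
      _ ≤ _ := by gcongr
  have hp₂' : (⌊(N : ℝ) / p⌋₊ : ℝ) / q ≤ x := by
    calc (⌊(N : ℝ) / p⌋₊ : ℝ) / q ≤ (N : ℝ) / p / q := by gcongr
      _ = x := div_div _ _ _
  have hq₁' : x - 1 / p ≤ ⌊(N : ℝ) / q⌋₊ / p := by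
    calc x - 1 / p = ((N : ℝ) / q - 1) / p := by rw [sub_div, div_div, mul_comm]
      _ ≤ _ := by gcongr
  have hq₂' : (⌊(N : ℝ) / q⌋₊ : ℝ) / p ≤ x := by
    calc (⌊(N : ℝ) / q⌋₊ : ℝ) / p ≤ (N : ℝ) / q / p := by gcongr
      _ = x := by rw [div_div, mul_comm]
  have hrecip : 1 / (p : ℝ) + 1 / q ≤ 1 := by
    have := one_div_le_one_div_of_le two_pos hp'
    have := one_div_le_one_div_of_le two_pos hq'
    linarith
  rw [mul_one, abs_le]
  constructor <;> linarith

theorem sum_mul_norm_sum_centeredDvd_mul_sq_le (N : ℕ) {S : Finset ℕ} (hS : ∀ p ∈ S, p.Prime)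
    (f : ℕ → ℂ) :
    ∑ p ∈ S, (p : ℝ) * ‖∑ n ∈ Icc 1 N, (centeredDvd p n : ℂ) * f n‖ ^ 2 ≤
      (N + ∑ p ∈ S, (p : ℝ)) * ∑ n ∈ Icc 1 N, ‖f n‖ ^ 2 := by
  let toVec : (ℕ → ℂ) → EuclideanSpace ℂ (Icc 1 N) := fun u => WithLp.toLp 2 fun n => u n
  have hinner : ∀ u g : ℕ → ℂ, ⟪toVec u, toVec g⟫_ℂ = ∑ n ∈ Icc 1 N, conj (u n) * g n := by
    intro u g
    simp only [toVec, EuclideanSpace.inner_toLp_toLp, dotProduct, Pi.star_apply, RCLike.star_def,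
      mul_comm (g _)]
    exact sum_coe_sort (Icc 1 N) fun n => conj (u n) * g n
  have hnorm : ∀ g : ℕ → ℂ, ‖toVec g‖ ^ 2 = ∑ n ∈ Icc 1 N, ‖g n‖ ^ 2 := fun g =>
    (EuclideanSpace.norm_sq_eq _).trans (sum_coe_sort (Icc 1 N) fun n => ‖g n‖ ^ 2)
  let e : ℕ → EuclideanSpace ℂ (Icc 1 N) := fun p => toVec fun n => centeredDvd p n
  have hdiag : ∀ p ∈ S, ‖e p‖ ^ 2 ≤ N / p := fun p hp => by
    simpa only [e, hnorm, Complex.norm_real, Real.norm_eq_abs, sq_abs]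
      using sum_centeredDvd_sq_le N (hS p hp).two_le
  have hoff : ∀ p ∈ S, ∀ q ∈ S, p ≠ q → ‖⟪e p, e q⟫_ℂ‖ ≤ 1 := fun p hp q hq hpq => by
    simpa only [e, hinner, Complex.conj_ofReal, ← Complex.ofReal_mul, ← Complex.ofReal_sum,
      Complex.norm_real, Real.norm_eq_abs] using abs_sum_centeredDvd_mul_le_one N
        ((Nat.coprime_primes (hS p hp) (hS q hq)).2 hpq) (hS p hp).two_le (hS q hq).two_le
  have hpos : ∀ p ∈ S, (0 : ℝ) < p := fun p hp => by exact_mod_cast (hS p hp).pos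
  have halmost : ∀ c : ℕ → ℂ, ‖∑ p ∈ S, c p • e p‖ ^ 2 ≤
      (N + ∑ p ∈ S, (p : ℝ)) * ∑ p ∈ S, ‖c p‖ ^ 2 / p := fun c => by
    have hcs : (∑ p ∈ S, ‖c p‖) ^ 2 ≤ (∑ p ∈ S, ‖c p‖ ^ 2 / p) * ∑ p ∈ S, (p : ℝ) :=
      sum_sq_le_sum_mul_sum_of_sq_le_mul S (fun p hp => by positivity)
        (fun p hp => (hpos p hp).le) fun p hp => by rw [div_mul_cancel₀ _ (hpos p hp).ne']
    calc ‖∑ p ∈ S, c p • e p‖ ^ 2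
        ≤ ∑ p ∈ S, N / p * ‖c p‖ ^ 2 + 1 * (∑ p ∈ S, ‖c p‖) ^ 2 :=
          norm_sum_smul_sq_le_of_norm_inner_le S e _ zero_le_one hdiag hoff c
      _ ≤ N * ∑ p ∈ S, ‖c p‖ ^ 2 / p + (∑ p ∈ S, ‖c p‖ ^ 2 / p) * ∑ p ∈ S, (p : ℝ) := by
          rw [one_mul, mul_sum]
          exact add_le_add (sum_congr rfl fun p _ => by ring).le hcs
      _ = (N + ∑ p ∈ S, (p : ℝ)) * ∑ p ∈ S, ‖c p‖ ^ 2 / p := by ring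
  have hdual := sum_mul_norm_inner_sq_le_of_norm_sum_smul_sq_le S e hpos (by positivity) halmost
    (toVec f)
  simpa only [e, hinner, hnorm, Complex.conj_ofReal] using hdual

theorem sum_le_mul_self_of_forall_lt {S : Finset ℕ} {P : ℕ} (h : ∀ p ∈ S, p < P) :
    ∑ p ∈ S, p ≤ P * P :=
  calc ∑ p ∈ S, p ≤ #S • P := sum_le_card_nsmul _ _ _ fun p hp => (h p hp).le
    _ ≤ P * P := Nat.mul_le_mul_right P <| by
      simpa using card_le_card fun p hp => mem_range.2 (h p hp)

theorem one_div_mul_norm_average_sq_eq (N : ℕ) (f : ℕ → ℂ) {p : ℕ} (hp : p ≠ 0) :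
    1 / (p : ℝ) *
        ‖(1 / (N : ℂ)) * ∑ n ∈ Icc 1 N, f n * (1 - (p : ℂ) * (if p ∣ n then 1 else 0))‖ ^ 2
      = p * ‖∑ n ∈ Icc 1 N, (centeredDvd p n : ℂ) * f n‖ ^ 2 / N ^ 2 := by
  have hp' : (p : ℂ) ≠ 0 := Nat.cast_ne_zero.2 hp
  have hsum : ∑ n ∈ Icc 1 N, f n * (1 - (p : ℂ) * (if p ∣ n then 1 else 0))
      = -p * ∑ n ∈ Icc 1 N, (centeredDvd p n : ℂ) * f n := by
    rw [mul_sum]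
    refine sum_congr rfl fun n _ => ?_
    unfold centeredDvd
    split_ifs <;> push_cast <;> field_simp <;> ring
  rw [hsum, norm_mul, norm_mul, norm_neg, norm_div, norm_one, Complex.norm_natCast,
    Complex.norm_natCast]
  field_simp

/-- Turán–Kubilius type inequality: there is an absolute constant `C > 0` such that
for any set `S` of primes less than `P`, any `N ≥ P³` and any 1-bounded `f : ℕ → ℂ`,
`∑_{p ∈ S} (1/p) * |(1/N) ∑_{n ≤ N} f n (1 - p·𝟙_{p ∣ n})|² ≤ C`. -/
theorem turan_kubilius :
    ∃ C : ℝ, 0 < C ∧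
      ∀ (P N : ℕ) (S : Finset ℕ) (f : ℕ → ℂ),
        (∀ p ∈ S, p.Prime ∧ p < P) → P ^ 3 ≤ N → (∀ n, ‖f n‖ ≤ 1) →
        ∑ p ∈ S, (1 / (p : ℝ)) *
            ‖(1 / (N : ℂ)) * ∑ n ∈ Finset.Icc 1 N,
                f n * (1 - (p : ℂ) * (if p ∣ n then 1 else 0))‖ ^ 2 ≤ C := by
  refine ⟨2, two_pos, fun P N S f hS hN hf => ?_⟩
  have hprime : ∀ p ∈ S, p.Prime := fun p hp => (hS p hp).1
  have hprimes_sum : ∑ p ∈ S, (p : ℝ) ≤ N := by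
    have hP : P * P ≤ P ^ 3 := by
      rcases P.eq_zero_or_pos with rfl | hP
      · simp
      · exact (pow_two P).symm.le.trans (Nat.pow_le_pow_right hP (by norm_num))
    rw [← Nat.cast_sum]
    exact_mod_cast (sum_le_mul_self_of_forall_lt fun p hp => (hS p hp).2).trans (hP.trans hN)
  have hf_sum : ∑ n ∈ Icc 1 N, ‖f n‖ ^ 2 ≤ N := by
    simpa using sum_le_card_nsmul (Icc 1 N) (fun n => ‖f n‖ ^ 2) 1 fun n _ =>
      pow_le_one₀ (norm_nonneg _) (hf n)
  calc ∑ p ∈ S, 1 / (p : ℝ) * ‖(1 / (N : ℂ)) * ∑ n ∈ Icc 1 N,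
        f n * (1 - (p : ℂ) * (if p ∣ n then 1 else 0))‖ ^ 2
      = (∑ p ∈ S, p * ‖∑ n ∈ Icc 1 N, (centeredDvd p n : ℂ) * f n‖ ^ 2) / N ^ 2 := by
        rw [sum_div]
        exact sum_congr rfl fun p hp => one_div_mul_norm_average_sq_eq N f (hprime p hp).ne_zero
    _ ≤ (N + ∑ p ∈ S, (p : ℝ)) * (∑ n ∈ Icc 1 N, ‖f n‖ ^ 2) / N ^ 2 := by
        gcongr
        exact sum_mul_norm_sum_centeredDvd_mul_sq_le N hprime f
    _ ≤ (N + N) * N / N ^ 2 := by gcongr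
    _ ≤ 2 := by
        rcases N.eq_zero_or_pos with rfl | hN₀
        · simp
        · field_simp; norm_num
end

section
/- There is an absolute constant $C > 0$ such that the following holds. For every $\varepsilon \in (0,1)$ and every natural number $P$, for all sufficiently large $N$ (depending on $P$), the set $T$ of primes $p < P$ satisfying $\frac{1}{N} \left| \sum_{n \le N} \mu(n) - \sum_{n \le N} \mu(n)\, p\, \mathbb{1}_{p \mid n} \right| \ge \varepsilon$ satisfies $\sum_{p \in T} \frac{1}{p} \le C \varepsilon^{-2}$. -/
namespace BadPrimesSparseAux
open ArithmeticFunction Finset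
open scoped ArithmeticFunction.Moebius


lemma count_dvd (d N : ℕ) :
    ∑ n ∈ Finset.Icc 1 N, (if d ∣ n then (1:ℝ) else 0) = (N / d : ℕ) := by
  rw [Finset.sum_boole]
  norm_cast
  rw [show Finset.Icc 1 N = Finset.Ioc 0 N from Finset.Icc_add_one_left_eq_Ioc 0 N]
  exact Nat.Ioc_filter_dvd_card_eq_div N d

lemma G_diag (N p : ℕ) :
    ∑ n ∈ Finset.Icc 1 N, (1 - (p:ℝ) * (if p ∣ n then 1 else 0))^2 ≤ (N:ℝ) * (1 + (p:ℝ)) := by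
  have expand : ∀ n, (1 - (p:ℝ) * (if p ∣ n then 1 else 0))^2
      = 1 - (2*(p:ℝ) - (p:ℝ)^2) * (if p ∣ n then 1 else 0) := by
    intro n; split <;> ring
  simp only [expand]
  rw [Finset.sum_sub_distrib, Finset.sum_const, ← Finset.mul_sum, count_dvd, Nat.card_Icc]
  have h1 : (p:ℝ) * (N / p : ℕ) ≤ N := by
    have := Nat.div_mul_le_self N p
    calc (p:ℝ) * (N / p : ℕ) = ((N / p * p : ℕ) : ℝ) := by push_cast; ring
    _ ≤ N := by exact_mod_cast this
  have h2 : (0:ℝ) ≤ (p:ℝ) * (N / p : ℕ) := by positivity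
  have hN : ((N + 1 - 1 : ℕ) • (1:ℝ)) = N := by simp
  rw [hN]
  nlinarith [h1, h2, sq_nonneg ((p:ℝ))]

lemma abs_mu_le (n : ℕ) : |(μ n : ℝ)| ≤ 1 := by
  have := ArithmeticFunction.abs_moebius_le_one (n := n)
  exact_mod_cast (by exact_mod_cast this : |(μ n : ℝ)| ≤ (1:ℝ))

lemma mod_cast_bound (N d : ℕ) (hd : 0 < d) :
    (N:ℝ) - (d:ℝ) * (N / d : ℕ) = (N % d : ℕ) ∧ ((N % d : ℕ) : ℝ) ≤ d := by
  constructor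
  · have := Nat.div_add_mod N d
    have : (d:ℝ) * (N / d : ℕ) + (N % d : ℕ) = N := by exact_mod_cast this
    linarith
  · exact_mod_cast (Nat.mod_lt N hd).le

lemma G_offdiag (N p q : ℕ) (hp : p.Prime) (hq : q.Prime) (hpq : p ≠ q) :
    |∑ n ∈ Finset.Icc 1 N, (1 - (p:ℝ) * (if p ∣ n then 1 else 0)) *
      (1 - (q:ℝ) * (if q ∣ n then 1 else 0))| ≤ 3 * (p:ℝ) * q := by
  have key : ∀ n, (1 - (p:ℝ) * (if p ∣ n then 1 else 0)) * (1 - (q:ℝ) * (if q ∣ n then 1 else 0))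
      = 1 - (p:ℝ) * (if p ∣ n then 1 else 0) - (q:ℝ) * (if q ∣ n then 1 else 0)
        + (p:ℝ) * q * (if p * q ∣ n then 1 else 0) := by
    intro n
    have hco : Nat.Coprime p q := (Nat.coprime_primes hp hq).mpr hpq
    have hiff : p * q ∣ n ↔ p ∣ n ∧ q ∣ n := by
      constructor
      · intro h; exact ⟨(dvd_mul_right p q).trans h, (dvd_mul_left q p).trans h⟩
      · rintro ⟨h1, h2⟩; exact hco.mul_dvd_of_dvd_of_dvd h1 h2
    by_cases h1 : p ∣ n <;> by_cases h2 : q ∣ n <;>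
      simp [h1, h2, hiff, *] <;> ring
  simp only [key]
  rw [Finset.sum_add_distrib, Finset.sum_sub_distrib, Finset.sum_sub_distrib,
    Finset.sum_const, ← Finset.mul_sum, ← Finset.mul_sum, ← Finset.mul_sum,
    count_dvd, count_dvd, count_dvd, Nat.card_Icc]
  have hN : ((N + 1 - 1 : ℕ) • (1:ℝ)) = N := by simp
  rw [hN]
  obtain ⟨e1, b1⟩ := mod_cast_bound N p hp.pos
  obtain ⟨e2, b2⟩ := mod_cast_bound N q hq.pos
  obtain ⟨e3, b3⟩ := mod_cast_bound N (p*q) (Nat.mul_pos hp.pos hq.pos)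
  have hpq3 : ((p*q : ℕ):ℝ) = (p:ℝ)*q := by push_cast; ring
  have split : (N:ℝ) - (p:ℝ) * (N / p : ℕ) - (q:ℝ) * (N / q : ℕ) + (p:ℝ)*q * ((N / (p*q) : ℕ):ℝ)
      = ((N % p : ℕ):ℝ) + ((N % q : ℕ):ℝ) - ((N % (p*q) : ℕ):ℝ) := by
    rw [← e1, ← e2, ← e3, hpq3]; ring
  rw [split]
  have hp1 : (1:ℝ) ≤ p := by exact_mod_cast hp.one_lt.le
  have hq1 : (1:ℝ) ≤ q := by exact_mod_cast hq.one_lt.le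
  have h0 : (0:ℝ) ≤ (N % p : ℕ) := by positivity
  have h0' : (0:ℝ) ≤ (N % q : ℕ) := by positivity
  have h0'' : (0:ℝ) ≤ (N % (p*q) : ℕ) := by positivity
  rw [abs_le]
  rw [hpq3] at b3
  constructor <;> nlinarith

set_option maxHeartbeats 1000000 in
lemma key_bound (P N : ℕ) (hN : 12 * P^2 + 1 ≤ N) :
    ∑ p ∈ (Finset.range P).filter Nat.Prime,
      (1/(p:ℝ)) * ((1/(N:ℝ)) * ∑ n ∈ Finset.Icc 1 N,
        (μ n : ℝ) * (1 - (p:ℝ) * (if p ∣ n then 1 else 0)))^2 ≤ 3 := by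
  have hNpos : 0 < N := by omega
  have hNR : (0:ℝ) < N := by exact_mod_cast hNpos
  set F := (Finset.range P).filter Nat.Prime with hF
  set c : ℕ → ℕ → ℝ := fun p n => 1 - (p:ℝ) * (if p ∣ n then 1 else 0) with hc
  set D : ℕ → ℝ := fun p => (1/(N:ℝ)) * ∑ n ∈ Finset.Icc 1 N, (μ n : ℝ) * c p n with hD
  set S := ∑ p ∈ F, (1/(p:ℝ)) * D p ^ 2 with hSdef
  show S ≤ 3
  have hSnonneg : 0 ≤ S := by
    apply Finset.sum_nonneg; intro p _; positivity
  -- basic facts about p ∈ F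
  have hprime : ∀ p ∈ F, p.Prime := fun p hp => (Finset.mem_filter.mp hp).2
  have hplt : ∀ p ∈ F, p < P := fun p hp => Finset.mem_range.mp (Finset.mem_filter.mp hp).1
  have hp2 : ∀ p ∈ F, (2:ℝ) ≤ p := fun p hp => by exact_mod_cast (hprime p hp).two_le
  -- |D p| ≤ 2
  have hDle : ∀ p ∈ F, |D p| ≤ 2 := by
    intro p hp
    have habs : |∑ n ∈ Finset.Icc 1 N, (μ n : ℝ) * c p n| ≤ 2 * N := by
      calc |∑ n ∈ Finset.Icc 1 N, (μ n : ℝ) * c p n|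
          ≤ ∑ n ∈ Finset.Icc 1 N, |(μ n : ℝ) * c p n| := Finset.abs_sum_le_sum_abs _ _
        _ ≤ ∑ n ∈ Finset.Icc 1 N, (1 + (p:ℝ) * (if p ∣ n then 1 else 0)) := by
            apply Finset.sum_le_sum; intro n _
            rw [abs_mul]
            have hp2' := hp2 p hp
            have h1 : |c p n| ≤ 1 + (p:ℝ) * (if p ∣ n then 1 else 0) := by
              simp only [hc]; split
              · rw [abs_le]; constructor <;> nlinarith
              · simp
            calc |(μ n:ℝ)| * |c p n| ≤ 1 * |c p n| :=
                  mul_le_mul_of_nonneg_right (abs_mu_le n) (abs_nonneg _)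
              _ = |c p n| := one_mul _
              _ ≤ _ := h1
        _ = (N:ℝ) + (p:ℝ) * ((N / p : ℕ):ℝ) := by
            rw [Finset.sum_add_distrib, Finset.sum_const, ← Finset.mul_sum, count_dvd,
              Nat.card_Icc]
            simp
        _ ≤ 2 * N := by
            have : (p:ℝ) * ((N / p : ℕ):ℝ) ≤ N := by
              calc (p:ℝ) * ((N / p : ℕ):ℝ) = ((N / p * p : ℕ) : ℝ) := by push_cast; ring
                _ ≤ N := by exact_mod_cast Nat.div_mul_le_self N p
            linarith
    rw [hD]
    rw [abs_mul, abs_of_nonneg (by positivity : (0:ℝ) ≤ 1/(N:ℝ))]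
    rw [div_mul_eq_mul_div, one_mul, div_le_iff₀ hNR]
    linarith
  -- g n
  set g : ℕ → ℝ := fun n => ∑ p ∈ F, (D p / p) * c p n with hg
  have step1 : S = (1/(N:ℝ)) * ∑ n ∈ Finset.Icc 1 N, (μ n : ℝ) * g n := by
    have key : ∀ p ∈ F, (1/(p:ℝ)) * D p ^ 2
        = ∑ n ∈ Finset.Icc 1 N, (1/(N:ℝ)) * ((μ n:ℝ) * ((D p / p) * c p n)) := by
      intro p hp
      have e : ∑ n ∈ Finset.Icc 1 N, (1/(N:ℝ)) * ((μ n:ℝ) * ((D p / p) * c p n))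
          = (D p / p) * ((1/(N:ℝ)) * ∑ n ∈ Finset.Icc 1 N, (μ n:ℝ) * c p n) := by
        rw [Finset.mul_sum, Finset.mul_sum]
        exact Finset.sum_congr rfl fun n _ => by ring
      rw [e]
      show (1/(p:ℝ)) * D p ^ 2 = (D p / p) * D p
      ring
    have e2 : (1/(N:ℝ)) * ∑ n ∈ Finset.Icc 1 N, (μ n : ℝ) * g n
        = ∑ n ∈ Finset.Icc 1 N, ∑ p ∈ F, (1/(N:ℝ)) * ((μ n:ℝ) * ((D p / p) * c p n)) := by
      rw [Finset.mul_sum]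
      refine Finset.sum_congr rfl fun n _ => ?_
      simp only [hg]
      rw [Finset.mul_sum, Finset.mul_sum]
    rw [e2, Finset.sum_comm, hSdef]
    exact Finset.sum_congr rfl key
  -- step 2: S ≤ (1/N) ∑ |g n|
  have step2 : S ≤ (1/(N:ℝ)) * ∑ n ∈ Finset.Icc 1 N, |g n| := by
    rw [step1]
    apply mul_le_mul_of_nonneg_left _ (by positivity : (0:ℝ) ≤ 1/(N:ℝ))
    apply Finset.sum_le_sum
    intro n _
    calc (μ n : ℝ) * g n ≤ |(μ n : ℝ) * g n| := le_abs_self _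
      _ = |(μ n : ℝ)| * |g n| := abs_mul _ _
      _ ≤ 1 * |g n| := mul_le_mul_of_nonneg_right (abs_mu_le n) (abs_nonneg _)
      _ = |g n| := one_mul _
  -- step 3: Cauchy-Schwarz
  have step3 : (∑ n ∈ Finset.Icc 1 N, |g n|) ≤ Real.sqrt ((N:ℝ) * ∑ n ∈ Finset.Icc 1 N, g n ^ 2) := by
    rw [Real.le_sqrt (Finset.sum_nonneg fun n _ => abs_nonneg _) (by positivity)]
    calc (∑ n ∈ Finset.Icc 1 N, |g n|) ^ 2 = (∑ n ∈ Finset.Icc 1 N, 1 * |g n|) ^ 2 := by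
          simp
      _ ≤ (∑ n ∈ Finset.Icc 1 N, (1:ℝ) ^ 2) * ∑ n ∈ Finset.Icc 1 N, |g n| ^ 2 :=
          Finset.sum_mul_sq_le_sq_mul_sq _ _ _
      _ = (N:ℝ) * ∑ n ∈ Finset.Icc 1 N, g n ^ 2 := by
          rw [Finset.sum_const]
          simp [Nat.card_Icc, sq_abs]
  -- step 4: expand ∑ g²
  have step4 : ∑ n ∈ Finset.Icc 1 N, g n ^ 2
      = ∑ p ∈ F, ∑ q ∈ F, (D p / p) * (D q / q) *
          (∑ n ∈ Finset.Icc 1 N, c p n * c q n) := by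
    have e1 : ∀ n, g n ^ 2 = ∑ p ∈ F, ∑ q ∈ F, (D p / p) * (D q / q) * (c p n * c q n) := by
      intro n
      rw [sq]
      simp only [hg]
      rw [Finset.sum_mul_sum]
      exact Finset.sum_congr rfl fun p _ => Finset.sum_congr rfl fun q _ => by ring
    simp only [e1]
    rw [Finset.sum_comm]
    refine Finset.sum_congr rfl fun p _ => ?_
    rw [Finset.sum_comm]
    refine Finset.sum_congr rfl fun q _ => ?_
    rw [Finset.mul_sum]
  -- step 5: bound the expanded sum
  have step5 : ∑ n ∈ Finset.Icc 1 N, g n ^ 2 ≤ 2 * N * S + 12 * (P:ℝ)^2 := by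
    rw [step4]
    have bound : ∀ p ∈ F, ∀ q ∈ F, (D p / p) * (D q / q) * (∑ n ∈ Finset.Icc 1 N, c p n * c q n)
        ≤ (if p = q then (D p / p)^2 * ((N:ℝ)*(1+(p:ℝ))) else 0) + 12 := by
      intro p hp q hq
      by_cases hpq : p = q
      · subst hpq
        rw [if_pos rfl]
        have hGd : ∑ n ∈ Finset.Icc 1 N, c p n * c p n ≤ (N:ℝ)*(1+(p:ℝ)) := by
          calc ∑ n ∈ Finset.Icc 1 N, c p n * c p n = ∑ n ∈ Finset.Icc 1 N, c p n ^ 2 :=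
                Finset.sum_congr rfl fun n _ => (sq (c p n)).symm
            _ ≤ _ := G_diag N p
        nlinarith [sq_nonneg (D p / p), hGd, sq_abs (D p / p)]
      · have hGo := G_offdiag N p q (hprime p hp) (hprime q hq) hpq
        simp only [if_neg hpq, zero_add]
        have hp0 : (0:ℝ) < p := by have := hp2 p hp; linarith
        have hq0 : (0:ℝ) < q := by have := hp2 q hq; linarith
        have hDp := hDle p hp
        have hDq := hDle q hq
        calc (D p / p) * (D q / q) * (∑ n ∈ Finset.Icc 1 N, c p n * c q n)
            ≤ |(D p / p) * (D q / q) * (∑ n ∈ Finset.Icc 1 N, c p n * c q n)| := le_abs_self _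
          _ = (|D p|/p) * (|D q|/q) * |∑ n ∈ Finset.Icc 1 N, c p n * c q n| := by
              rw [abs_mul, abs_mul, abs_div, abs_div, abs_of_pos hp0, abs_of_pos hq0]
          _ ≤ (2/(p:ℝ)) * (2/(q:ℝ)) * (3*(p:ℝ)*q) := by gcongr
          _ = 12 := by field_simp; ring
    calc ∑ p ∈ F, ∑ q ∈ F, (D p / p) * (D q / q) * (∑ n ∈ Finset.Icc 1 N, c p n * c q n)
        ≤ ∑ p ∈ F, ∑ q ∈ F,
            ((if p = q then (D p / p)^2 * ((N:ℝ)*(1+(p:ℝ))) else 0) + 12) :=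
          Finset.sum_le_sum fun p hp => Finset.sum_le_sum fun q hq => bound p hp q hq
      _ = (∑ p ∈ F, (D p / p)^2 * ((N:ℝ)*(1+(p:ℝ)))) + (F.card : ℝ) * F.card * 12 := by
          simp only [Finset.sum_add_distrib, Finset.sum_const, nsmul_eq_mul]
          have e3 : ∀ p ∈ F, (∑ q ∈ F, if p = q then (D p / (p:ℝ))^2 * ((N:ℝ)*(1+(p:ℝ))) else 0)
              = (D p / (p:ℝ))^2 * ((N:ℝ)*(1+(p:ℝ))) := fun p hp => by
            rw [Finset.sum_ite_eq, if_pos hp]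
          rw [Finset.sum_congr rfl e3]
          ring
      _ ≤ 2 * N * S + 12 * (P:ℝ)^2 := by
          have diag : ∑ p ∈ F, (D p / p)^2 * ((N:ℝ)*(1+(p:ℝ))) ≤ 2 * N * S := by
            rw [hSdef, Finset.mul_sum]
            apply Finset.sum_le_sum
            intro p hp
            have hp2' := hp2 p hp
            have hp0 : (0:ℝ) < p := by linarith
            have key : ∀ x : ℝ, (x / p)^2 * ((N:ℝ)*(1+(p:ℝ)))
                = ((1/(p:ℝ)) * x^2) * ((N:ℝ)*(1+(p:ℝ))/p) := by
              intro x
              ring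
            rw [key (D p)]
            have h2 : ((N:ℝ)*(1+(p:ℝ))/p) ≤ 2*N := by
              rw [div_le_iff₀ hp0]; nlinarith
            have h3 : (0:ℝ) ≤ (1/(p:ℝ)) * D p^2 := by positivity
            calc ((1/(p:ℝ)) * D p^2) * ((N:ℝ)*(1+(p:ℝ))/p)
                ≤ ((1/(p:ℝ)) * D p^2) * (2*N) := mul_le_mul_of_nonneg_left h2 h3
              _ = 2 * (N:ℝ) * ((1/(p:ℝ)) * D p^2) := by ring
          have hcard : (F.card : ℝ) ≤ P := by
            have : F.card ≤ P := le_trans (Finset.card_filter_le _ _) (Finset.card_range P).le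
            exact_mod_cast this
          have hcard0 : (0:ℝ) ≤ (F.card : ℝ) := by positivity
          nlinarith [diag, hcard, hcard0]
  -- endgame
  have hP2N : 12 * (P:ℝ)^2 ≤ (N:ℝ) := by
    have : 12 * P^2 ≤ N := by omega
    exact_mod_cast this
  have hsum_nonneg : (0:ℝ) ≤ ∑ n ∈ Finset.Icc 1 N, g n ^ 2 :=
    Finset.sum_nonneg fun n _ => sq_nonneg _
  have chain : S ≤ Real.sqrt (2*S + 1) := by
    have h1 : S ≤ (1/(N:ℝ)) * Real.sqrt ((N:ℝ) * ∑ n ∈ Finset.Icc 1 N, g n ^ 2) :=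
      step2.trans (mul_le_mul_of_nonneg_left step3 (by positivity))
    have h2 : (N:ℝ) * (∑ n ∈ Finset.Icc 1 N, g n ^ 2) ≤ (N:ℝ)^2 * (2*S+1) := by
      nlinarith [step5, hP2N, hSnonneg, hNR]
    calc S ≤ (1/(N:ℝ)) * Real.sqrt ((N:ℝ) * ∑ n ∈ Finset.Icc 1 N, g n ^ 2) := h1
      _ ≤ (1/(N:ℝ)) * Real.sqrt ((N:ℝ)^2 * (2*S+1)) := by
          apply mul_le_mul_of_nonneg_left (Real.sqrt_le_sqrt h2) (by positivity)
      _ = Real.sqrt (2*S+1) := by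
          rw [Real.sqrt_mul (sq_nonneg _), Real.sqrt_sq hNR.le]
          field_simp
  have hsq : S^2 ≤ 2*S+1 := (Real.le_sqrt hSnonneg (by linarith)).mp chain
  nlinarith [hsq, hSnonneg]

end BadPrimesSparseAux

open BadPrimesSparseAux in
open ArithmeticFunction in
open scoped ArithmeticFunction.Moebius in
open scoped Classical in
/-- There is an absolute constant `C > 0` such that for every `ε ∈ (0,1)` and every `P`,
for all sufficiently large `N`, the set of primes `p < P` with
`(1/N)|∑_{n ≤ N} μ(n) - ∑_{n ≤ N} μ(n) p 𝟙_{p ∣ n}| ≥ ε` has `∑ 1/p ≤ C ε⁻²`. -/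
theorem bad_primes_sparse :
    ∃ C : ℝ, 0 < C ∧
      ∀ ε : ℝ, 0 < ε → ε < 1 → ∀ P : ℕ, ∃ N₀ : ℕ, ∀ N : ℕ, N₀ ≤ N →
        ∑ p ∈ (Finset.range P).filter (fun p => p.Prime ∧
            ε ≤ (1 / (N : ℝ)) * |∑ n ∈ Finset.Icc 1 N, (μ n : ℝ) -
              ∑ n ∈ Finset.Icc 1 N, (μ n : ℝ) * p * (if p ∣ n then 1 else 0)|),
          (1 / (p : ℝ)) ≤ C / ε ^ 2 := by
  refine ⟨3, by norm_num, ?_⟩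
  intro ε hε hε1 P
  refine ⟨12 * P^2 + 1, fun N hN => ?_⟩
  have hNpos : 0 < N := by omega
  have hNR : (0:ℝ) < N := by exact_mod_cast hNpos
  set D : ℕ → ℝ := fun p => (1/(N:ℝ)) * ∑ n ∈ Finset.Icc 1 N,
    (μ n : ℝ) * (1 - (p:ℝ) * (if p ∣ n then 1 else 0)) with hD
  -- the displayed quantity equals |D p|
  have hreform : ∀ p : ℕ, (1 / (N : ℝ)) * |∑ n ∈ Finset.Icc 1 N, (μ n : ℝ) -
      ∑ n ∈ Finset.Icc 1 N, (μ n : ℝ) * p * (if p ∣ n then 1 else 0)| = |D p| := by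
    intro p
    have e : ∑ n ∈ Finset.Icc 1 N, (μ n : ℝ) -
        ∑ n ∈ Finset.Icc 1 N, (μ n : ℝ) * p * (if p ∣ n then 1 else 0)
        = ∑ n ∈ Finset.Icc 1 N, (μ n : ℝ) * (1 - (p:ℝ) * (if p ∣ n then 1 else 0)) := by
      rw [← Finset.sum_sub_distrib]
      exact Finset.sum_congr rfl fun n _ => by ring
    rw [e, hD, abs_mul, abs_of_nonneg (by positivity : (0:ℝ) ≤ 1/(N:ℝ))]
  set T := (Finset.range P).filter (fun p => p.Prime ∧
      ε ≤ (1 / (N : ℝ)) * |∑ n ∈ Finset.Icc 1 N, (μ n : ℝ) -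
        ∑ n ∈ Finset.Icc 1 N, (μ n : ℝ) * p * (if p ∣ n then 1 else 0)|) with hT
  have hTsub : T ⊆ (Finset.range P).filter Nat.Prime := by
    intro p hp
    rw [hT, Finset.mem_filter] at hp
    exact Finset.mem_filter.mpr ⟨hp.1, hp.2.1⟩
  have main : (∑ p ∈ T, (1/(p:ℝ))) * ε^2 ≤ 3 := by
    rw [Finset.sum_mul]
    calc ∑ p ∈ T, (1/(p:ℝ)) * ε^2 ≤ ∑ p ∈ T, (1/(p:ℝ)) * D p ^ 2 := by
          apply Finset.sum_le_sum
          intro p hp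
          rw [hT, Finset.mem_filter] at hp
          have hbad : ε ≤ |D p| := (hreform p) ▸ hp.2.2
          have h2 : ε ^ 2 ≤ D p ^ 2 := by
            rw [← sq_abs (D p)]
            exact pow_le_pow_left₀ hε.le hbad 2
          have hp0 : (0:ℝ) ≤ 1/(p:ℝ) := by positivity
          exact mul_le_mul_of_nonneg_left h2 hp0
      _ ≤ ∑ p ∈ (Finset.range P).filter Nat.Prime, (1/(p:ℝ)) * D p ^ 2 := by
          apply Finset.sum_le_sum_of_subset_of_nonneg hTsub
          intro p _ _
          positivity
      _ ≤ 3 := key_bound P N hN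
  have hε2 : (0:ℝ) < ε^2 := by positivity
  rw [le_div_iff₀ hε2]
  exact main
end

section
/- There is an absolute constant $C > 0$ such that for every natural number $N \ge 2$, $\left| \sum_{n \le N} \mu(n) \log n \right| \le C \sum_{M \le N} \frac{N}{M} \left| \sum_{n \le M} \mu(n) \right|$, where sums over $n \le N$, $M \le N$, $n \le M$ range over positive integers. -/
open Finset ArithmeticFunction
open ArithmeticFunction.Moebius ArithmeticFunction.zeta

private lemma hyperbola_swap (N : ℕ) (g : ℕ → ℕ → ℝ) :
    ∑ n ∈ Icc 1 N, ∑ p ∈ n.divisorsAntidiagonal, g p.1 p.2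
      = ∑ d ∈ Icc 1 N, ∑ e ∈ Icc 1 (N / d), g d e := by
  rw [Finset.sum_sigma', Finset.sum_sigma']
  refine Finset.sum_nbij' (fun x => ⟨x.2.1, x.2.2⟩) (fun x => ⟨x.1 * x.2, (x.1, x.2)⟩)
    ?_ ?_ ?_ ?_ ?_
  · rintro ⟨n, d, e⟩ hx
    simp only [mem_sigma, mem_Icc, Nat.mem_divisorsAntidiagonal] at hx ⊢
    obtain ⟨⟨h1, h2⟩, hde, hn0⟩ := hx
    have hd : 0 < d := Nat.pos_of_ne_zero fun h => hn0 (by rw [← hde, h, zero_mul])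
    have he : 0 < e := Nat.pos_of_ne_zero fun h => hn0 (by rw [← hde, h, mul_zero])
    refine ⟨⟨hd, ?_⟩, he, ?_⟩
    · calc d ≤ d * e := Nat.le_mul_of_pos_right d he
        _ = n := hde
        _ ≤ N := h2
    · rw [Nat.le_div_iff_mul_le hd]
      calc e * d = d * e := mul_comm e d
        _ = n := hde
        _ ≤ N := h2
  · rintro ⟨d, e⟩ hx
    simp only [mem_sigma, mem_Icc, Nat.mem_divisorsAntidiagonal] at hx ⊢
    obtain ⟨⟨hd1, hd2⟩, he1, he2⟩ := hx
    rw [Nat.le_div_iff_mul_le (by omega)] at he2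
    refine ⟨⟨Nat.one_le_iff_ne_zero.2 (Nat.mul_ne_zero (by omega) (by omega)), ?_⟩, trivial,
      Nat.mul_ne_zero (by omega) (by omega)⟩
    calc d * e = e * d := mul_comm _ _
      _ ≤ N := he2
  · rintro ⟨n, d, e⟩ hx
    simp only [mem_sigma, mem_Icc, Nat.mem_divisorsAntidiagonal] at hx
    obtain ⟨-, hde, -⟩ := hx
    subst hde
    rfl
  · rintro ⟨d, e⟩ _; rfl
  · rintro ⟨n, d, e⟩ _; rfl

private lemma log_factorial_eq (N : ℕ) :
    Real.log (Nat.factorial N) = ∑ m ∈ Icc 1 N, Λ m * ((N / m : ℕ) : ℝ) := by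
  have h1 : Real.log (Nat.factorial N) = ∑ n ∈ Icc 1 N, Real.log n := by
    rw [← Finset.prod_Ico_id_eq_factorial, Finset.Ico_add_one_right_eq_Icc, Nat.cast_prod,
      Real.log_prod]
    intro x hx
    simp only [mem_Icc] at hx
    have : (0:ℝ) < x := by exact_mod_cast hx.1
    exact ne_of_gt this
  rw [h1]
  have h2 : ∀ n ∈ Icc 1 N, Real.log n = ∑ p ∈ n.divisorsAntidiagonal, Λ p.1 := by
    intro n _
    rw [Nat.sum_divisorsAntidiagonal (fun d _ => Λ d), vonMangoldt_sum]
  rw [Finset.sum_congr rfl h2, hyperbola_swap N (fun d _ => Λ d)]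
  refine Finset.sum_congr rfl fun d _ => ?_
  rw [Finset.sum_const, Nat.card_Icc]
  simp [nsmul_eq_mul, mul_comm]

private lemma psi_block (N : ℕ) (hN : 1 ≤ N) :
    ∑ m ∈ Ioc (N / 2) N, Λ m ≤ 2 * N := by
  set k := N / 2 with hk
  have key : ∑ m ∈ Ioc k N, Λ m
      ≤ Real.log (Nat.factorial N) - 2 * Real.log (Nat.factorial k) := by
    rw [log_factorial_eq, log_factorial_eq]
    have hext : ∑ m ∈ Icc 1 k, Λ m * ((k / m : ℕ) : ℝ)
        = ∑ m ∈ Icc 1 N, Λ m * ((k / m : ℕ) : ℝ) := by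
      apply Finset.sum_subset (Icc_subset_Icc le_rfl (Nat.div_le_self N 2))
      intro x hx hnx
      simp only [mem_Icc] at hx hnx
      have : k / x = 0 := Nat.div_eq_of_lt (by omega)
      simp [this]
    rw [hext, Finset.mul_sum, ← Finset.sum_sub_distrib]
    have hw : ∀ m ∈ Icc 1 N, 0 ≤ Λ m * ((N / m : ℕ) : ℝ) - 2 * (Λ m * ((k / m : ℕ) : ℝ)) := by
      intro m hm
      simp only [mem_Icc] at hm
      have hq : k / m = (N / m) / 2 := by
        rw [hk, Nat.div_div_eq_div_mul, Nat.div_div_eq_div_mul, Nat.mul_comm]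
      have h2 : 2 * (k / m) ≤ N / m := by rw [hq]; omega
      have : (2 : ℝ) * ((k / m : ℕ) : ℝ) ≤ ((N / m : ℕ) : ℝ) := by exact_mod_cast h2
      nlinarith [vonMangoldt_nonneg (n := m)]
    calc ∑ m ∈ Ioc k N, Λ m
        = ∑ m ∈ Ioc k N, (Λ m * ((N / m : ℕ) : ℝ) - 2 * (Λ m * ((k / m : ℕ) : ℝ))) := by
          refine Finset.sum_congr rfl fun m hm => ?_
          simp only [mem_Ioc] at hm
          have h1 : N / m = 1 := Nat.div_eq_of_lt_le (by omega) (by omega)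
          have h2 : k / m = 0 := Nat.div_eq_of_lt (by omega)
          rw [h1, h2]
          simp
      _ ≤ ∑ m ∈ Icc 1 N, (Λ m * ((N / m : ℕ) : ℝ) - 2 * (Λ m * ((k / m : ℕ) : ℝ))) := by
          refine Finset.sum_le_sum_of_subset_of_nonneg ?_ fun i hi _ => hw i hi
          intro x hx
          simp only [mem_Ioc] at hx
          simp only [mem_Icc]
          omega
  have hfac : Nat.factorial N ≤ 2 ^ N * N * (Nat.factorial k) ^ 2 := by
    have hkN : k ≤ N := Nat.div_le_self N 2
    have h1 : N.choose k * Nat.factorial k * Nat.factorial (N - k) = Nat.factorial N :=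
      Nat.choose_mul_factorial_mul_factorial hkN
    have h2 : N.choose k ≤ 2 ^ N := by
      calc N.choose k ≤ ∑ i ∈ range (N + 1), N.choose i :=
            Finset.single_le_sum (fun i _ => Nat.zero_le _) (mem_range.2 (by omega))
        _ = 2 ^ N := Nat.sum_range_choose N
    have h3 : Nat.factorial (N - k) ≤ N * Nat.factorial k := by
      have hcase : N - k = k ∨ N - k = k + 1 := by omega
      rcases hcase with h | h
      · rw [h]; exact Nat.le_mul_of_pos_left _ hN
      · rw [h, Nat.factorial_succ]
        exact Nat.mul_le_mul_right _ (by omega)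
    calc Nat.factorial N = N.choose k * Nat.factorial k * Nat.factorial (N - k) := h1.symm
      _ ≤ 2 ^ N * Nat.factorial k * (N * Nat.factorial k) :=
          Nat.mul_le_mul (Nat.mul_le_mul_right _ h2) h3
      _ = 2 ^ N * N * (Nat.factorial k) ^ 2 := by ring
  have hlog : Real.log (Nat.factorial N)
      ≤ N * Real.log 2 + Real.log N + 2 * Real.log (Nat.factorial k) := by
    have hpos : (0 : ℝ) < Nat.factorial N := by positivity
    have hc : (Nat.factorial N : ℝ) ≤ (2 : ℝ) ^ N * N * ((Nat.factorial k : ℝ)) ^ 2 := by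
      exact_mod_cast hfac
    calc Real.log (Nat.factorial N) ≤ Real.log ((2 : ℝ) ^ N * N * ((Nat.factorial k : ℝ)) ^ 2) :=
          Real.log_le_log hpos hc
      _ = N * Real.log 2 + Real.log N + 2 * Real.log (Nat.factorial k) := by
          have hN0 : (0 : ℝ) < N := by exact_mod_cast hN
          have hk0 : (0 : ℝ) < (Nat.factorial k : ℝ) := by positivity
          rw [Real.log_mul (by positivity) (by positivity),
            Real.log_mul (by positivity) (by positivity),
            Real.log_pow, Real.log_pow]
          push_cast
          ring
  have hlog2 : Real.log 2 ≤ 1 := by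
    have := Real.log_le_sub_one_of_pos (by norm_num : (0:ℝ) < 2)
    linarith
  have hlogN : Real.log N ≤ N := by
    have hN0 : (0 : ℝ) < N := by exact_mod_cast hN
    have := Real.log_le_sub_one_of_pos hN0
    linarith
  have hN0 : (0 : ℝ) ≤ N := by positivity
  nlinarith [key, hlog]

private lemma psi_le (N : ℕ) : ∑ m ∈ Icc 1 N, Λ m ≤ 4 * N := by
  induction N using Nat.strong_induction_on with
  | _ N ih =>
    rcases Nat.eq_zero_or_pos N with h0 | hN
    · simp [h0]
    have hIcc : ∀ n : ℕ, Icc 1 n = Ioc 0 n := by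
      intro n; ext x; simp [Nat.succ_le_iff]
    have hsplit : ∑ m ∈ Icc 1 N, Λ m
        = ∑ m ∈ Icc 1 (N / 2), Λ m + ∑ m ∈ Ioc (N / 2) N, Λ m := by
      rw [hIcc, hIcc]
      exact (Finset.sum_Ioc_consecutive _ (Nat.zero_le _) (Nat.div_le_self N 2)).symm
    have h1 : ∑ m ∈ Icc 1 (N / 2), Λ m ≤ 4 * (N / 2 : ℕ) :=
      ih _ (Nat.div_lt_self hN one_lt_two)
    have h2 : ((N / 2 : ℕ) : ℝ) ≤ (N : ℝ) / 2 := Nat.cast_div_le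
    have h3 := psi_block N hN
    rw [hsplit]
    linarith

private lemma moebius_log_eq (n : ℕ) :
    (μ n : ℝ) * Real.log n = -∑ p ∈ n.divisorsAntidiagonal, Λ p.1 * (μ p.2 : ℝ) := by
  have h1 : (pmul (μ : ArithmeticFunction ℝ) log) * ζ = -Λ := by
    ext m
    rw [coe_mul_zeta_apply]
    simp only [pmul_apply, intCoe_apply, log_apply]
    have h := sum_moebius_mul_log_eq (n := m)
    simp only [log_apply] at h
    rw [h]; rfl
  have hAF : (pmul (μ : ArithmeticFunction ℝ) log) = -Λ * (μ : ArithmeticFunction ℝ) := by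
    calc pmul (μ : ArithmeticFunction ℝ) log
        = pmul (μ : ArithmeticFunction ℝ) log * ((ζ : ArithmeticFunction ℝ) * μ) := by
          rw [coe_zeta_mul_coe_moebius, mul_one]
      _ = (pmul (μ : ArithmeticFunction ℝ) log * ζ) * μ := by rw [mul_assoc]
      _ = -Λ * μ := by rw [h1]
  have hcongr := congrArg (fun f : ArithmeticFunction ℝ => f n) hAF
  have hneg : ∀ j : ℕ, (-Λ) j = -(Λ j) := fun j => rfl
  simpa [mul_apply, pmul_apply, intCoe_apply, log_apply, hneg, neg_mul,
    ← Finset.sum_neg_distrib] using hcongr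

open ArithmeticFunction ArithmeticFunction.Moebius in
/-- There is an absolute `C > 0` such that for every `N ≥ 2`,
`|∑_{n ≤ N} μ(n) log n| ≤ C ∑_{M ≤ N} (N/M) |∑_{n ≤ M} μ(n)|`. -/
theorem moebius_log_bound :
    ∃ C : ℝ, 0 < C ∧ ∀ N : ℕ, 2 ≤ N →
      |∑ n ∈ Finset.Icc 1 N, (μ n : ℝ) * Real.log n| ≤
        C * ∑ M ∈ Finset.Icc 1 N, ((N : ℝ) / M) * |∑ n ∈ Finset.Icc 1 M, (μ n : ℝ)| := by
  refine ⟨4, by norm_num, fun N hN => ?_⟩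
  set Mer : ℕ → ℝ := fun M => ∑ n ∈ Icc 1 M, (μ n : ℝ) with hMer
  have hid : ∑ n ∈ Icc 1 N, (μ n : ℝ) * Real.log n
      = -∑ m ∈ Icc 1 N, Λ m * Mer (N / m) := by
    calc ∑ n ∈ Icc 1 N, (μ n : ℝ) * Real.log n
        = ∑ n ∈ Icc 1 N, -∑ p ∈ n.divisorsAntidiagonal, Λ p.1 * (μ p.2 : ℝ) :=
          Finset.sum_congr rfl fun n _ => moebius_log_eq n
      _ = -∑ n ∈ Icc 1 N, ∑ p ∈ n.divisorsAntidiagonal, Λ p.1 * (μ p.2 : ℝ) := by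
          rw [Finset.sum_neg_distrib]
      _ = -∑ m ∈ Icc 1 N, ∑ e ∈ Icc 1 (N / m), Λ m * (μ e : ℝ) := by
          rw [hyperbola_swap N (fun d e => Λ d * (μ e : ℝ))]
      _ = -∑ m ∈ Icc 1 N, Λ m * Mer (N / m) := by
          refine congrArg _ (Finset.sum_congr rfl fun m _ => ?_)
          rw [hMer, ← Finset.mul_sum]
  rw [hid, abs_neg]
  calc |∑ m ∈ Icc 1 N, Λ m * Mer (N / m)|
      ≤ ∑ m ∈ Icc 1 N, Λ m * |Mer (N / m)| := by
        refine (Finset.abs_sum_le_sum_abs _ _).trans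
          (le_of_eq (Finset.sum_congr rfl fun m _ => ?_))
        rw [abs_mul, abs_of_nonneg vonMangoldt_nonneg]
    _ = ∑ K ∈ Icc 1 N, ∑ m ∈ (Icc 1 N).filter (fun m => N / m = K), Λ m * |Mer (N / m)| := by
        refine (Finset.sum_fiberwise_of_maps_to (fun m hm => ?_) _).symm
        simp only [mem_Icc] at hm ⊢
        constructor
        · exact Nat.one_le_div_iff (by omega) |>.2 hm.2
        · exact le_trans (Nat.div_le_self N m) le_rfl
    _ ≤ ∑ K ∈ Icc 1 N, 4 * ((N : ℝ) / K) * |Mer K| := by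
        refine Finset.sum_le_sum fun K hK => ?_
        simp only [mem_Icc] at hK
        have step1 : ∑ m ∈ (Icc 1 N).filter (fun m => N / m = K), Λ m * |Mer (N / m)|
            = (∑ m ∈ (Icc 1 N).filter (fun m => N / m = K), Λ m) * |Mer K| := by
          rw [Finset.sum_mul]
          refine Finset.sum_congr rfl fun m hm => ?_
          rw [(Finset.mem_filter.mp hm).2]
        rw [step1]
        have hsub : (Icc 1 N).filter (fun m => N / m = K) ⊆ Icc 1 (N / K) := by
          intro m hm
          obtain ⟨hm1, hm2⟩ := Finset.mem_filter.mp hm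
          simp only [mem_Icc] at hm1 ⊢
          refine ⟨hm1.1, ?_⟩
          rw [Nat.le_div_iff_mul_le (by omega)]
          calc m * K = N / m * m := by rw [hm2, mul_comm]
            _ ≤ N := Nat.div_mul_le_self N m
        have hψ : ∑ m ∈ (Icc 1 N).filter (fun m => N / m = K), Λ m
            ≤ 4 * ((N / K : ℕ) : ℝ) :=
          le_trans (Finset.sum_le_sum_of_subset_of_nonneg hsub
            (fun i _ _ => vonMangoldt_nonneg)) (psi_le _)
        have hcast : ((N / K : ℕ) : ℝ) ≤ (N : ℝ) / K := Nat.cast_div_le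
        have habs : (0 : ℝ) ≤ |Mer K| := abs_nonneg _
        have hψ' : ∑ m ∈ (Icc 1 N).filter (fun m => N / m = K), Λ m ≤ 4 * ((N : ℝ) / K) := by
          linarith
        have hψ0 : (0:ℝ) ≤ ∑ m ∈ (Icc 1 N).filter (fun m => N / m = K), Λ m :=
          Finset.sum_nonneg fun i _ => vonMangoldt_nonneg
        nlinarith
    _ = 4 * ∑ M ∈ Icc 1 N, ((N : ℝ) / M) * |Mer M| := by
        rw [Finset.mul_sum]
        refine Finset.sum_congr rfl fun K _ => by ring
end

section
/- For every $\delta > 0$ there exists $x_0$ such that for all real $x \ge x_0$, the number of primes less than or equal to $x$ is at most $(\log 4 + \delta) \frac{x}{\log x}$. -/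
/-- Erdős' version of Chebyshev's bound: for every `δ > 0`, for all sufficiently large
real `x`, the number of primes `≤ x` is at most `(log 4 + δ) x / log x`. -/
theorem chebyshev_upper_bound :
    ∀ δ : ℝ, 0 < δ → ∃ x₀ : ℝ, ∀ x : ℝ, x₀ ≤ x →
      (Nat.primeCounting ⌊x⌋₊ : ℝ) ≤ (Real.log 4 + δ) * (x / Real.log x) := by
  intro δ hδ
  obtain ⟨x₀, hx₀⟩ := Filter.eventually_atTop.mp (Chebyshev.eventually_primeCounting_le hδ)
  exact ⟨x₀, fun x hx => (hx₀ x hx).trans_eq (mul_div_assoc _ _ _)⟩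
end
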